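/- Let α, q : ℝ → ℝ≥0 be measurable with q a probability density, ∫α(x)dx ∈ (0,∞), and α(x) = 0 whenever q(x) = 0. Suppose (X^{i,l}_k(j)), for i ∈ {1..N}, l ∈ {1..M}, j ∈ {1..d}, k ∈ {1..n}, are i.i.d. with density q. Define p^{N,M} = ∏_{k=1}^n (1/N)∑_{i=1}^N ∏_{j=1}^d (1/M)∑_{l=1}^M α(X^{i,l}_k(j))/q(X^{i,l}_k(j)), and p = (∫α(x)dx)^{nd}. If ρ := ∫α(x)^2/q(x)dx / (∫α(x)dx)^2 < ∞, then E[(p^{N,M}/p − 1)^2] = ((1/N)((ρ/M) + (M−1)/M)^d + (N−1)/N)^n − 1. -/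

import Mathlib

/-!
The estimator is built from the importance weight `α / q` by alternately taking empirical means
and products of i.i.d. copies; under the proposal law `q dx` the weight has mean `∫ α` and
relative second moment `∫ f² / (∫ f)² = ρ`. An empirical mean preserves the mean and turns the
relative second moment `r` into `r / K + (K - 1) / K` (the variance is divided by `K`); a product
of `K` copies raises both the mean and `r` to the power `K`. Since the estimator has mean `p`, its
relative variance is its relative second moment minus one.
-/

open MeasureTheory ProbabilityTheory
open scoped ENNReal

section Moments

variable {E : Type*} [MeasurableSpace E]

noncomputable def sampleMean (K : ℕ) (f : E → ℝ) (w : Fin K → E) : ℝ :=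
  (1 / K : ℝ) * ∑ i, f (w i)

def sampleProd (K : ℕ) (f : E → ℝ) (w : Fin K → E) : ℝ := ∏ i, f (w i)

noncomputable def relMoment (μ : Measure E) (f : E → ℝ) : ℝ :=
  (∫ x, f x ^ 2 ∂μ) / (∫ x, f x ∂μ) ^ 2

variable {ν : Measure E} {f : E → ℝ} {K : ℕ}

lemma integral_sampleProd [SigmaFinite ν] :
    ∫ w, sampleProd K f w ∂(Measure.pi fun _ => ν) = (∫ x, f x ∂ν) ^ K := by
  simp only [sampleProd, integral_fintype_prod_eq_pow, Fintype.card_fin]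

lemma relMoment_sampleProd [SigmaFinite ν] :
    relMoment (Measure.pi fun _ => ν) (sampleProd K f) = relMoment ν f ^ K := by
  have hsq : (fun w => sampleProd K f w ^ 2) = sampleProd K fun x => f x ^ 2 := by
    ext w; simp [sampleProd, Finset.prod_pow]
  rw [relMoment, relMoment, hsq, integral_sampleProd, integral_sampleProd, div_pow, ← pow_mul,
    ← pow_mul, mul_comm]

variable [IsProbabilityMeasure ν]

lemma memLp_sampleMean (hf : MemLp f 2 ν) :
    MemLp (sampleMean K f) 2 (Measure.pi fun _ => ν) :=
  (memLp_finsetSum _ fun i _ =>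
    hf.comp_measurePreserving (measurePreserving_eval _ i)).const_mul _

lemma memLp_sampleProd (hf : MemLp f 2 ν) :
    MemLp (sampleProd K f) 2 (Measure.pi fun _ => ν) := by
  refine (memLp_two_iff_integrable_sq ?_).2 ?_
  · exact Finset.aestronglyMeasurable_fun_prod _ fun i _ =>
      hf.aestronglyMeasurable.comp_measurePreserving (measurePreserving_eval _ i)
  · simpa only [sampleProd, ← Finset.prod_pow] using
      Integrable.fintype_prod (μ := fun _ => ν) fun _ => hf.integrable_sq

lemma integral_sampleMean (hK : K ≠ 0) (hf : Integrable f ν) :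
    ∫ w, sampleMean K f w ∂(Measure.pi fun _ => ν) = ∫ x, f x ∂ν := by
  simp only [sampleMean]
  rw [integral_const_mul, integral_finsetSum _ fun i _ => integrable_comp_eval hf]
  simp only [integral_comp_eval (μ := fun _ => ν) hf.aestronglyMeasurable, Finset.sum_const,
    Finset.card_univ, Fintype.card_fin, nsmul_eq_mul]
  field_simp

lemma integral_sampleMean_sq (hK : K ≠ 0) (hf : MemLp f 2 ν) :
    ∫ w, sampleMean K f w ^ 2 ∂(Measure.pi fun _ => ν)
      = ((∫ x, f x ^ 2 ∂ν) + (K - 1) * (∫ x, f x ∂ν) ^ 2) / K := by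
  have hvar : Var[sampleMean K f; Measure.pi fun _ => ν] = Var[f; ν] / K := by
    have : sampleMean K f = fun w => (1 / K : ℝ) * (∑ i, fun w : Fin K → E => f (w i)) w := by
      ext w; simp [sampleMean, Finset.sum_apply]
    rw [this, variance_const_mul, variance_sum_pi fun _ => hf]
    simp only [Finset.sum_const, Finset.card_univ, Fintype.card_fin, nsmul_eq_mul]
    field_simp
  rw [variance_eq_sub (memLp_sampleMean hf), variance_eq_sub hf,
    integral_sampleMean hK (hf.integrable one_le_two)] at hvar
  simp only [Pi.pow_apply] at hvar
  field_simp at hvar ⊢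
  linarith

lemma relMoment_sampleMean (hK : K ≠ 0) (hf : MemLp f 2 ν) (hmean : ∫ x, f x ∂ν ≠ 0) :
    relMoment (Measure.pi fun _ => ν) (sampleMean K f) = relMoment ν f / K + (K - 1) / K := by
  rw [relMoment, relMoment, integral_sampleMean_sq hK hf,
    integral_sampleMean hK (hf.integrable one_le_two)]
  field_simp

end Moments

lemma integral_div_sub_one_sq {Ω : Type*} [MeasurableSpace Ω] {μ : Measure Ω}
    [IsProbabilityMeasure μ] {Z : Ω → ℝ} (hZ : MemLp Z 2 μ) {c : ℝ} (hc : c ≠ 0)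
    (hmean : ∫ ω, Z ω ∂μ = c) :
    ∫ ω, (Z ω / c - 1) ^ 2 ∂μ = relMoment μ Z - 1 := by
  have hexp : ∀ ω, (Z ω / c - 1) ^ 2 = c⁻¹ ^ 2 * Z ω ^ 2 - 2 * c⁻¹ * Z ω + 1 := by
    intro ω; ring
  have h1 := hZ.integrable_sq.const_mul (c⁻¹ ^ 2)
  have h2 := (hZ.integrable one_le_two).const_mul (2 * c⁻¹)
  have h3 : Integrable (fun ω => c⁻¹ ^ 2 * Z ω ^ 2 - 2 * c⁻¹ * Z ω) μ := h1.sub h2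
  simp_rw [hexp]
  rw [integral_add h3 (integrable_const _), integral_sub h1 h2, integral_const_mul,
    integral_const_mul, hmean, relMoment, hmean]
  simp only [integral_const, probReal_univ, smul_eq_mul, mul_one]
  field_simp
  ring

lemma integral_comp_div_sub_one_sq {Ω E : Type*} [MeasurableSpace Ω] [MeasurableSpace E]
    {μ : Measure Ω} {ν : Measure E} [IsProbabilityMeasure ν] {Y : Ω → E} (hY : HasLaw Y ν μ)
    {Z : E → ℝ} (hZ : MemLp Z 2 ν) {c : ℝ} (hc : c ≠ 0) (hmean : ∫ x, Z x ∂ν = c) :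
    ∫ ω, (Z (Y ω) / c - 1) ^ 2 ∂μ = relMoment ν Z - 1 := by
  rw [← integral_div_sub_one_sq hZ hc hmean]
  exact hY.integral_comp ((by fun_prop : Continuous fun t : ℝ => (t / c - 1) ^ 2)
    |>.comp_aestronglyMeasurable hZ.aestronglyMeasurable)

section SpaceTime

variable {E : Type*} [MeasurableSpace E]

/-- The argument `y k i j l` is the sample `X^{i,l}_k(j)`: time `k`, particle `i`,
coordinate `j`, inner particle `l`. -/
noncomputable def spaceTimeEstimator (n N M d : ℕ) (f : E → ℝ) :
    (Fin n → Fin N → Fin d → Fin M → E) → ℝ :=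
  sampleProd n (sampleMean N (sampleProd d (sampleMean M f)))

variable {ν : Measure E} [IsProbabilityMeasure ν] {f : E → ℝ} {n N M d : ℕ}

lemma memLp_spaceTimeEstimator (hf : MemLp f 2 ν) :
    MemLp (spaceTimeEstimator n N M d f) 2
      (Measure.pi fun _ => Measure.pi fun _ => Measure.pi fun _ => Measure.pi fun _ => ν) :=
  memLp_sampleProd <| memLp_sampleMean <| memLp_sampleProd <| memLp_sampleMean hf

lemma integral_spaceTimeEstimator (hN : N ≠ 0) (hM : M ≠ 0) (hf : MemLp f 2 ν) :
    ∫ y, spaceTimeEstimator n N M d f y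
        ∂(Measure.pi fun _ => Measure.pi fun _ => Measure.pi fun _ => Measure.pi fun _ => ν)
      = (∫ x, f x ∂ν) ^ (n * d) := by
  rw [spaceTimeEstimator, integral_sampleProd,
    integral_sampleMean hN ((memLp_sampleProd (memLp_sampleMean hf)).integrable one_le_two),
    integral_sampleProd, integral_sampleMean hM (hf.integrable one_le_two), ← pow_mul, mul_comm]

lemma relMoment_spaceTimeEstimator (hN : N ≠ 0) (hM : M ≠ 0) (hf : MemLp f 2 ν)
    (hmean : ∫ x, f x ∂ν ≠ 0) :
    relMoment (Measure.pi fun _ => Measure.pi fun _ => Measure.pi fun _ => Measure.pi fun _ => ν)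
        (spaceTimeEstimator n N M d f)
      = ((1 / N) * (relMoment ν f / M + (M - 1) / M) ^ d + (N - 1) / N) ^ n := by
  have hmean' : ∫ z, sampleProd d (sampleMean M f) z
      ∂(Measure.pi fun _ => Measure.pi fun _ => ν) ≠ 0 := by
    rw [integral_sampleProd, integral_sampleMean hM (hf.integrable one_le_two)]
    exact pow_ne_zero _ hmean
  rw [spaceTimeEstimator, relMoment_sampleProd,
    relMoment_sampleMean hN (memLp_sampleProd (memLp_sampleMean hf)) hmean',
    relMoment_sampleProd, relMoment_sampleMean hM hf hmean, one_div_mul_eq_div]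

end SpaceTime

lemma mul_div_sq_of_imp {K : Type*} [Field K] {a b : K} (h : b = 0 → a = 0) :
    b * (a / b) ^ 2 = a ^ 2 / b := by
  rw [sq, ← mul_assoc, mul_div_cancel_of_imp' h, mul_div_assoc', ← sq]

section Density

variable {X : Type*} [MeasurableSpace X] {μ : Measure X} {q : X → ℝ}

lemma integral_withDensity_ofReal (hqm : Measurable q) (hq : ∀ x, 0 ≤ q x) (g : X → ℝ) :
    ∫ x, g x ∂μ.withDensity (fun x => ENNReal.ofReal (q x)) = ∫ x, q x * g x ∂μ := by
  rw [show (fun x => ENNReal.ofReal (q x)) = fun x => ((q x).toNNReal : ℝ≥0∞) from rfl,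
    integral_withDensity_eq_integral_smul hqm.real_toNNReal]
  simp [NNReal.smul_def, Real.coe_toNNReal _ (hq _)]

lemma integrable_withDensity_ofReal_iff (hqm : Measurable q) (hq : ∀ x, 0 ≤ q x) {g : X → ℝ} :
    Integrable g (μ.withDensity fun x => ENNReal.ofReal (q x))
      ↔ Integrable (fun x => q x * g x) μ := by
  rw [show (fun x => ENNReal.ofReal (q x)) = fun x => ((q x).toNNReal : ℝ≥0∞) from rfl,
    integrable_withDensity_iff_integrable_smul hqm.real_toNNReal]
  simp [NNReal.smul_def, Real.coe_toNNReal _ (hq _)]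

lemma isProbabilityMeasure_withDensity_ofReal (hq : ∀ x, 0 ≤ q x) (hq1 : ∫ x, q x ∂μ = 1) :
    IsProbabilityMeasure (μ.withDensity fun x => ENNReal.ofReal (q x)) := by
  have hint : Integrable q μ := Integrable.of_integral_ne_zero (by simp [hq1])
  constructor
  rw [withDensity_apply _ MeasurableSet.univ, Measure.restrict_univ,
    ← ofReal_integral_eq_lintegral_ofReal hint (.of_forall hq), hq1, ENNReal.ofReal_one]

variable {α : X → ℝ}

lemma integral_div_withDensity_ofReal (hqm : Measurable q) (hq : ∀ x, 0 ≤ q x)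
    (habs : ∀ x, q x = 0 → α x = 0) :
    ∫ x, α x / q x ∂μ.withDensity (fun x => ENNReal.ofReal (q x)) = ∫ x, α x ∂μ := by
  simp_rw [integral_withDensity_ofReal hqm hq, mul_div_cancel_of_imp' (habs _)]

lemma relMoment_div_withDensity_ofReal (hqm : Measurable q) (hq : ∀ x, 0 ≤ q x)
    (habs : ∀ x, q x = 0 → α x = 0) :
    relMoment (μ.withDensity fun x => ENNReal.ofReal (q x)) (fun x => α x / q x)
      = (∫ x, α x ^ 2 / q x ∂μ) / (∫ x, α x ∂μ) ^ 2 := by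
  simp_rw [relMoment, integral_div_withDensity_ofReal hqm hq habs,
    integral_withDensity_ofReal hqm hq, mul_div_sq_of_imp (habs _)]

lemma memLp_div_withDensity_ofReal (hαm : Measurable α) (hqm : Measurable q)
    (hq : ∀ x, 0 ≤ q x) (habs : ∀ x, q x = 0 → α x = 0)
    (hsq : Integrable (fun x => α x ^ 2 / q x) μ) :
    MemLp (fun x => α x / q x) 2 (μ.withDensity fun x => ENNReal.ofReal (q x)) := by
  rw [memLp_two_iff_integrable_sq (hαm.fun_div hqm).aestronglyMeasurable,
    integrable_withDensity_ofReal_iff hqm hq]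
  simpa only [mul_div_sq_of_imp (habs _)] using hsq

end Density

lemma MeasureTheory.MeasurePreserving.of_leftInverse {α β : Type*} [MeasurableSpace α]
    [MeasurableSpace β] {μa : Measure α} {μb : Measure β} {f : α → β} {g : β → α}
    (hf : MeasurePreserving f μa μb) (hg : Measurable g) (hgf : Function.LeftInverse g f) :
    MeasurePreserving g μb μa :=
  ⟨hg, by rw [← hf.map_eq, Measure.map_map hg hf.measurable, hgf.comp_eq_id, Measure.map_id]⟩

section Sampling

variable {E : Type*} [MeasurableSpace E] (ν : Measure E)

lemma measurePreserving_pi_uncurry {ι κ ι' : Type*} [Fintype ι] [Fintype κ] [Fintype ι']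
    [SigmaFinite ν] (e : ι' ≃ ι × κ) :
    MeasurePreserving (fun (y : ι → κ → E) (p : ι') => y (e p).1 (e p).2)
      (Measure.pi fun _ => Measure.pi fun _ => ν) (Measure.pi fun _ => ν) := by
  refine ⟨by fun_prop, (Measure.pi_eq fun s hs => ?_).symm⟩
  have hpre : (fun (y : ι → κ → E) (p : ι') => y (e p).1 (e p).2) ⁻¹' Set.univ.pi s
      = Set.univ.pi fun i => Set.univ.pi fun j => s (e.symm (i, j)) := by
    ext y
    simp only [Set.mem_preimage, Set.mem_univ_pi]
    exact ⟨fun h i j => by simpa using h (e.symm (i, j)),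
      fun h p => by simpa using h (e p).1 (e p).2⟩
  rw [Measure.map_apply (by fun_prop) (.univ_pi hs), hpre, Measure.pi_pi]
  simp_rw [Measure.pi_pi]
  exact (Fintype.prod_prod_type fun p => ν (s (e.symm p))).symm.trans
    (e.symm.prod_comp fun p => ν (s p))

lemma hasLaw_spaceTimeSample [SigmaFinite ν] {Ω : Type*} [MeasurableSpace Ω] {μ : Measure Ω}
    {n N M d : ℕ} {Y : Fin n × Fin N × Fin M × Fin d → Ω → E}
    (hY : iIndepFun Y μ) (hlaw : ∀ p, HasLaw (Y p) ν μ) :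
    HasLaw (fun ω k i j l => Y (k, i, l, j) ω)
      (Measure.pi fun _ => Measure.pi fun _ => Measure.pi fun _ => Measure.pi fun _ => ν) μ := by
  have hunc := (measurePreserving_pi_uncurry ν (Equiv.refl (Fin n × Fin N × Fin M × Fin d))).comp
    (measurePreserving_pi _ _ fun _ => (measurePreserving_pi_uncurry ν (Equiv.refl _)).comp
      (measurePreserving_pi _ _ fun _ => measurePreserving_pi_uncurry ν (Equiv.prodComm _ _)))
  have hcurry := hunc.of_leftInverse
    (g := fun (x : Fin n × Fin N × Fin M × Fin d → E) k i j l => x (k, i, l, j)) (by fun_prop)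
    fun _ => rfl
  exact hcurry.comp_hasLaw (hY.hasLaw_pi hlaw)

end Sampling

theorem stmt3_general {Ω : Type*} [MeasurableSpace Ω] (μ : Measure Ω) [IsProbabilityMeasure μ]
    (n N M d : ℕ) (hN : 0 < N) (hM : 0 < M)
    (α q : ℝ → ℝ) (hq : ∀ x, 0 ≤ q x)
    (hαmeas : Measurable α) (hqmeas : Measurable q)
    (hqpdf : ∫ x, q x = 1)
    (hαpos : 0 < ∫ x, α x)
    (habs : ∀ x, q x = 0 → α x = 0)
    (hratio : Integrable (fun x => (α x) ^ 2 / q x))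
    (X : Fin n × Fin N × Fin M × Fin d → Ω → ℝ)
    (hindep : iIndepFun X μ)
    (hlaw : ∀ p, Measure.map (X p) μ
      = MeasureTheory.volume.withDensity (fun x => ENNReal.ofReal (q x))) :
    (∫ ω,
        ((∏ k : Fin n, (1 / (N : ℝ)) * ∑ i : Fin N, ∏ j : Fin d,
            (1 / (M : ℝ)) * ∑ l : Fin M,
              α (X (k, i, l, j) ω) / q (X (k, i, l, j) ω))
          / (∫ x, α x) ^ (n * d) - 1) ^ 2 ∂μ)
      = ((1 / (N : ℝ)) *
            (((∫ x, (α x) ^ 2 / q x) / (∫ x, α x) ^ 2) / M + ((M : ℝ) - 1) / M) ^ d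
          + ((N : ℝ) - 1) / N) ^ n - 1 := by
  set ν := volume.withDensity fun x => ENNReal.ofReal (q x)
  have : IsProbabilityMeasure ν := isProbabilityMeasure_withDensity_ofReal hq hqpdf
  have hw : MemLp (fun x => α x / q x) 2 ν :=
    memLp_div_withDensity_ofReal hαmeas hqmeas hq habs hratio
  have hwmean : ∫ x, α x / q x ∂ν = ∫ x, α x := integral_div_withDensity_ofReal hqmeas hq habs
  have hsample := hasLaw_spaceTimeSample ν hindep fun p =>
    ⟨.of_map_ne_zero (by simp [hlaw p, IsProbabilityMeasure.ne_zero]), hlaw p⟩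
  refine (integral_comp_div_sub_one_sq hsample (memLp_spaceTimeEstimator hw)
    (pow_ne_zero _ hαpos.ne') (by rw [integral_spaceTimeEstimator hN.ne' hM.ne' hw, hwmean])).trans ?_
  rw [relMoment_spaceTimeEstimator hN.ne' hM.ne' hw (hwmean ▸ hαpos.ne'),
    relMoment_div_withDensity_ofReal hqmeas hq habs]

/-- Relative variance identity for the normalizing-constant estimate of the space-time
particle filter applied to a fully i.i.d. target `∏_{k,j} α(x_k(j))`, with all proposal
samples i.i.d. with density `q`:
`E[(p^{N,M}/p - 1)^2] = ((1/N)((ρ/M) + (M-1)/M)^d + (N-1)/N)^n - 1`,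
where `ρ = ∫ α²/q / (∫ α)²` and `p = (∫ α)^{nd}`. -/
theorem stmt3 {Ω : Type*} [MeasurableSpace Ω] (μ : Measure Ω) [IsProbabilityMeasure μ]
    (n N M d : ℕ) (hn : 0 < n) (hN : 0 < N) (hM : 0 < M) (hd : 0 < d)
    (α q : ℝ → ℝ) (hα : ∀ x, 0 ≤ α x) (hq : ∀ x, 0 ≤ q x)
    (hαmeas : Measurable α) (hqmeas : Measurable q)
    (hqpdf : ∫ x, q x = 1)
    (hαint : Integrable α)
    (hαpos : 0 < ∫ x, α x)
    (habs : ∀ x, q x = 0 → α x = 0)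
    (hratio : Integrable (fun x => (α x) ^ 2 / q x))
    (X : Fin n × Fin N × Fin M × Fin d → Ω → ℝ)
    (hindep : iIndepFun X μ)
    (hlaw : ∀ p, Measure.map (X p) μ
      = MeasureTheory.volume.withDensity (fun x => ENNReal.ofReal (q x))) :
    (∫ ω,
        ((∏ k : Fin n, (1 / (N : ℝ)) * ∑ i : Fin N, ∏ j : Fin d,
            (1 / (M : ℝ)) * ∑ l : Fin M,
              α (X (k, i, l, j) ω) / q (X (k, i, l, j) ω))
          / (∫ x, α x) ^ (n * d) - 1) ^ 2 ∂μ)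
      = ((1 / (N : ℝ)) *
            (((∫ x, (α x) ^ 2 / q x) / (∫ x, α x) ^ 2) / M + ((M : ℝ) - 1) / M) ^ d
          + ((N : ℝ) - 1) / N) ^ n - 1 :=
  stmt3_general μ n N M d hN hM α q hq hαmeas hqmeas hqpdf hαpos habs hratio X hindep hlaw
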